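/- (Least Action Principle) A sandpile s : V → ℤ is stabilizable if and only if there exists u : V → ℕ such that s + Δu ≤ deg − 1 pointwise. Moreover, if s is stabilizable then its odometer is the pointwise smallest such function u. -/

import Mathlib

/-!
If `s + Δu` is stable with `u ≥ 0`, then every unstable vertex `i` has `u(i) ≥ 1` (otherwise
`Δu(i) ≥ 0`), and toppling `i` while lowering `u(i)` by one keeps `s + Δu` unchanged. Hence a legal
toppling sequence topples each vertex at most `u` times, and toppling unstable vertices in any
order must stop after at most `∑ u` steps. Conversely the odometer `u` of a stabilization
satisfies `s + Δu = S(s)`.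
-/

open scoped BigOperators
open Classical Filter

noncomputable section

namespace ThresholdState

variable {V : Type*} [Fintype V] [DecidableEq V]

/-- `A i j` is the number of directed edges from `i` to `j`. -/
def outdeg (A : V → V → ℕ) (i : V) : ℕ := ∑ j, A i j

def indeg (A : V → V → ℕ) (i : V) : ℕ := ∑ j, A j i

/-- Eulerian: out-degree equals in-degree at every vertex. -/
def Eulerian (A : V → V → ℕ) : Prop := ∀ i, outdeg A i = indeg A i

/-- (Strongly) connected multigraph. -/
def Connected (A : V → V → ℕ) : Prop :=
  ∀ i j : V, Relation.ReflTransGen (fun a b => 0 < A a b) i j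

def deg (A : V → V → ℕ) (i : V) : ℕ := outdeg A i

/-- Graph Laplacian: `Δu(i) = -deg(i)·u(i) + Σ_{e incoming to i} u(e⁻)`. -/
def lap (A : V → V → ℕ) (u : V → ℤ) (i : V) : ℤ :=
  -(deg A i : ℤ) * u i + ∑ j, (A j i : ℤ) * u j

def delta (z : V) : V → ℤ := fun j => if j = z then 1 else 0

/-- Toppling vertex `i`: replace `s` by `s + Δδ_i`. -/
def toppleAt (A : V → V → ℕ) (s : V → ℤ) (i : V) : V → ℤ :=
  fun j => s j + lap A (delta i) j

def applySeq (A : V → V → ℕ) (s : V → ℤ) (l : List V) : V → ℤ :=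
  l.foldl (toppleAt A) s

/-- A legal toppling sequence (avoiding the forbidden set `F`): each toppled
vertex is unstable when toppled and does not lie in `F`. -/
def ValidSeq (A : V → V → ℕ) (F : V → Prop) : (V → ℤ) → List V → Prop
  | _, [] => True
  | s, i :: l => ¬ F i ∧ (deg A i : ℤ) ≤ s i ∧ ValidSeq A F (toppleAt A s i) l

/-- Stable at every non-forbidden vertex. -/
def StableOff (A : V → V → ℕ) (F : V → Prop) (s : V → ℤ) : Prop :=
  ∀ i, ¬ F i → s i ≤ (deg A i : ℤ) - 1

def StabilizesTo (A : V → V → ℕ) (F : V → Prop) (s : V → ℤ) (l : List V) : Prop :=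
  ValidSeq A F s l ∧ StableOff A F (applySeq A s l)

def StabilizableVia (A : V → V → ℕ) (F : V → Prop) (s : V → ℤ) : Prop :=
  ∃ l, StabilizesTo A F s l

/-- Stabilizable with no forbidden vertices. -/
def Stabilizable (A : V → V → ℕ) (s : V → ℤ) : Prop :=
  StabilizableVia A (fun _ => False) s

def stabSeq (A : V → V → ℕ) (F : V → Prop) (s : V → ℤ) : List V :=
  if h : StabilizableVia A F s then h.choose else []

def stabilizeVia (A : V → V → ℕ) (F : V → Prop) (s : V → ℤ) : V → ℤ :=
  applySeq A s (stabSeq A F s)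

/-- Odometer: number of topplings at each vertex (`0` everywhere if not stabilizable). -/
def odometerVia (A : V → V → ℕ) (F : V → Prop) (s : V → ℤ) : V → ℕ :=
  fun i => (stabSeq A F s).count i

def sinkStabilize (A : V → V → ℕ) (z : V) (s : V → ℤ) : V → ℤ :=
  stabilizeVia A (fun i => i = z) s

def sinkOdometer (A : V → V → ℕ) (z : V) (s : V → ℤ) : V → ℕ :=
  odometerVia A (fun i => i = z) s

/-- `ρ` is `z`-recurrent (Dhar's burning test): `ρ(z) = deg z`, `ρ(i) ≤ deg i - 1`
off the sink, and every site other than `z` topples exactly once in the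
stabilization of `ρ + Δδ_z` with sink `z`. -/
def ZRec (A : V → V → ℕ) (z : V) (ρ : V → ℤ) : Prop :=
  ρ z = (deg A z : ℤ) ∧ (∀ i, i ≠ z → ρ i ≤ (deg A i : ℤ) - 1) ∧
  ∃ l : List V, StabilizesTo A (fun i => i = z) (fun j => ρ j + lap A (delta z) j) l ∧
    ∀ i, i ≠ z → l.count i = 1

/-- `κ` = number of `z`-recurrent sandpiles. -/
def kappa (A : V → V → ℕ) (z : V) : ℕ := Nat.card {ρ : V → ℤ // ZRec A z ρ}

def totalMass (s : V → ℤ) : ℤ := ∑ i, s i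

/-- Open addition operator `â_i` (with sink `z`). -/
def openAdd (A : V → V → ℕ) (z i : V) (ρ : V → ℤ) : V → ℤ :=
  fun j => if j = z then (deg A z : ℤ) else sinkStabilize A z (fun k => ρ k + delta i k) j

/-- `â_i⁻¹` on `Rec(z)`. -/
def openAddInv (A : V → V → ℕ) (z i : V) (ρ : V → ℤ) : V → ℤ :=
  if h : ∃ ρ', ZRec A z ρ' ∧ openAdd A z i ρ' = ρ then h.choose else ρ

/-- Burst size `av_{i→z}(ρ) = |â_i⁻¹ρ| - |ρ| + 1`. -/
def burst (A : V → V → ℕ) (z i : V) (ρ : V → ℤ) : ℤ :=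
  totalMass (openAddInv A z i ρ) - totalMass ρ + 1

/-- The `z`-recurrent decomposition `s = ρ + m·δ_z + Δv` with `ρ ∈ Rec(z)`, `v(z)=0`. -/
def ZDecomp (A : V → V → ℕ) (z : V) (s ρ : V → ℤ) (m : ℤ) (v : V → ℤ) : Prop :=
  ZRec A z ρ ∧ v z = 0 ∧ ∀ j, s j = ρ j + m * delta z j + lap A v j

/-- `R_z(s)`: the `z`-recurrent representative of `s`. -/
def Rz (A : V → V → ℕ) (z : V) (s : V → ℤ) : V → ℤ :=
  if h : ∃ ρ, ∃ m, ∃ v, ZDecomp A z s ρ m v then h.choose else s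

/-- `m_z(s)`: the integer in the `z`-recurrent decomposition of `s`. -/
def mz (A : V → V → ℕ) (z : V) (s : V → ℤ) : ℤ :=
  if h : ∃ m, ∃ ρ, ∃ v, ZDecomp A z s ρ m v then h.choose else 0

/-- Closed addition operator `a_i`. -/
def closedAdd (A : V → V → ℕ) (i : V) (s : V → ℤ) : V → ℤ :=
  if Stabilizable A (fun j => s j + delta i j) then
    stabilizeVia A (fun _ => False) (fun j => s j + delta i j)
  else fun j => s j + delta i j

/-- The closed chain after making the additions listed in `w` (in order). -/
def chain (A : V → V → ℕ) (s0 : V → ℤ) (w : List V) : V → ℤ :=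
  w.foldl (fun s i => closedAdd A i s) s0

/-- `w` is a threshold word for `s0`: the chain first becomes non-stabilizable
exactly after the additions in `w`, i.e. `τ = |w|` on the cylinder of `w`. -/
def IsThresholdWord (A : V → V → ℕ) (s0 : V → ℤ) (w : List V) : Prop :=
  ¬ Stabilizable A (chain A s0 w) ∧
  ∀ w' : List V, w' <+: w → w' ≠ w → Stabilizable A (chain A s0 w')

def wordProb (α : V → ℝ) (w : List V) : ℝ := (w.map α).prod

/-- `P_{s0}(E at the threshold time)`: total probability of the (disjoint)
cylinders of threshold words satisfying `E`. -/
def thresholdProb (A : V → V → ℕ) (α : V → ℝ) (s0 : V → ℤ) (E : List V → Prop) : ℝ :=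
  ∑' w : List V, if IsThresholdWord A s0 w ∧ E w then wordProb α w else 0

/-- `E_{s0}[f at the threshold time]`. -/
def thresholdExp (A : V → V → ℕ) (α : V → ℝ) (s0 : V → ℤ) (f : List V → ℝ) : ℝ :=
  ∑' w : List V, if IsThresholdWord A s0 w then wordProb α w * f w else 0


end ThresholdState

namespace ThresholdState

variable {V : Type*}

lemma count_cons_cast [DecidableEq V] (i : V) (l : List V) (k : V) :
    (((i :: l).count k : ℕ) : ℤ) = delta i k + (l.count k : ℤ) := by
  by_cases hk : k = i
  · subst hk
    simp [delta, add_comm]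
  · simp [delta, hk, Ne.symm hk]

section Fintype

variable [Fintype V]

def StableAfter (A : V → V → ℕ) (s : V → ℤ) (u : V → ℕ) : Prop :=
  ∀ i, s i + lap A (fun j => (u j : ℤ)) i ≤ (deg A i : ℤ) - 1

lemma lap_add (A : V → V → ℕ) (u v : V → ℤ) (i : V) :
    lap A (fun j => u j + v j) i = lap A u i + lap A v i := by
  simp only [lap, mul_add, Finset.sum_add_distrib]
  ring

lemma lap_nonneg_of_eq_zero (A : V → V → ℕ) {u : V → ℕ} {i : V} (hi : u i = 0) :
    0 ≤ lap A (fun j => (u j : ℤ)) i := by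
  simp only [lap, hi, Nat.cast_zero, mul_zero, zero_add]
  exact Finset.sum_nonneg fun j _ => by positivity

lemma StableAfter.one_le_of_unstable {A : V → V → ℕ} {s : V → ℤ} {u : V → ℕ}
    (h : StableAfter A s u) {i : V} (hi : (deg A i : ℤ) ≤ s i) : 1 ≤ u i := by
  by_contra hui
  have := lap_nonneg_of_eq_zero A (u := u) (i := i) (by omega)
  have := h i
  omega

variable [DecidableEq V]

lemma toppleAt_add_lap (A : V → V → ℕ) (s : V → ℤ) (i : V) (v : V → ℤ) (k : V) :
    toppleAt A s i k + lap A v k = s k + lap A (fun j => delta i j + v j) k := by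
  rw [toppleAt, lap_add]
  ring

lemma applySeq_apply (A : V → V → ℕ) (s : V → ℤ) (l : List V) (j : V) :
    applySeq A s l j = s j + lap A (fun k => (l.count k : ℤ)) j := by
  induction l generalizing s with
  | nil => simp [applySeq, lap]
  | cons i l ih =>
    change applySeq A (toppleAt A s i) l j = _
    simp only [ih, toppleAt_add_lap, count_cons_cast]

lemma StableAfter.toppleAt {A : V → V → ℕ} {s : V → ℤ} {u : V → ℕ}
    (h : StableAfter A s u) {i : V} (hui : 1 ≤ u i) :
    StableAfter A (toppleAt A s i) (Function.update u i (u i - 1)) := by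
  have hshift : (fun j => delta i j + ((Function.update u i (u i - 1) j : ℕ) : ℤ))
      = fun j => (u j : ℤ) := by
    funext j
    by_cases hj : j = i
    · subst hj
      simp [delta]
      omega
    · simp [delta, hj]
  intro k
  rw [toppleAt_add_lap, hshift]
  exact h k

lemma StableAfter.count_le_of_validSeq {A : V → V → ℕ} {F : V → Prop} {s : V → ℤ}
    {u : V → ℕ} {l : List V} (h : StableAfter A s u) (hl : ValidSeq A F s l) (k : V) :
    l.count k ≤ u k := by
  induction l generalizing s u with
  | nil => simp
  | cons i l ih =>
    obtain ⟨-, hunstable, hl⟩ := hl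
    have hui := h.one_le_of_unstable hunstable
    have := ih (h.toppleAt hui) hl
    by_cases hk : k = i
    · subst hk
      simp only [Function.update_self, List.count_cons_self] at this ⊢
      omega
    · simpa [Function.update_of_ne hk, List.count_cons, Ne.symm hk] using this

lemma StableAfter.odometerVia_le {A : V → V → ℕ} {F : V → Prop} {s : V → ℤ} {u : V → ℕ}
    (h : StableAfter A s u) (hs : StabilizableVia A F s) (k : V) :
    odometerVia A F s k ≤ u k := by
  rw [odometerVia, stabSeq, dif_pos hs]
  exact h.count_le_of_validSeq hs.choose_spec.1 k

lemma StableAfter.stabilizableVia {A : V → V → ℕ} (F : V → Prop) {s : V → ℤ} {u : V → ℕ}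
    (h : StableAfter A s u) : StabilizableVia A F s := by
  by_cases hstable : StableOff A F s
  · exact ⟨[], trivial, hstable⟩
  · obtain ⟨i, hiF, hi⟩ : ∃ i, ¬ F i ∧ (deg A i : ℤ) ≤ s i := by
      simp only [StableOff, not_forall] at hstable
      obtain ⟨i, hiF, hi⟩ := hstable
      exact ⟨i, hiF, by omega⟩
    have hui := h.one_le_of_unstable hi
    obtain ⟨l, hl, hlstable⟩ := (h.toppleAt hui).stabilizableVia F
    exact ⟨i :: l, ⟨hiF, hi, hl⟩, hlstable⟩
termination_by ∑ j, u j
decreasing_by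
  exact Finset.sum_lt_sum (fun j _ => by by_cases hj : j = i <;> simp [hj])
    ⟨i, Finset.mem_univ i, by simp only [Function.update_self]; omega⟩

lemma StabilizesTo.stableAfter_count {A : V → V → ℕ} {s : V → ℤ} {l : List V}
    (h : StabilizesTo A (fun _ => False) s l) : StableAfter A s (fun k => l.count k) := by
  intro i
  rw [← applySeq_apply]
  exact h.2 i not_false

end Fintype

end ThresholdState

open ThresholdState in
theorem statement_17_general {V : Type*} [Fintype V] [DecidableEq V]
    (A : V → V → ℕ) (s : V → ℤ) :
    (Stabilizable A s ↔
      ∃ u : V → ℕ, ∀ i, s i + lap A (fun j => (u j : ℤ)) i ≤ (deg A i : ℤ) - 1) ∧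
    (Stabilizable A s →
      ∀ u : V → ℕ, (∀ i, s i + lap A (fun j => (u j : ℤ)) i ≤ (deg A i : ℤ) - 1) →
        ∀ i, odometerVia A (fun _ => False) s i ≤ u i) := by
  refine ⟨⟨?_, ?_⟩, ?_⟩
  · rintro ⟨l, hl⟩
    exact ⟨_, hl.stableAfter_count⟩
  · rintro ⟨u, hu⟩
    exact StableAfter.stabilizableVia (u := u) _ hu
  · intro hs u hu
    exact StableAfter.odometerVia_le (u := u) hu hs

open ThresholdState in
/-- **Least Action Principle.** `s` is stabilizable iff there exists
`u : V → ℕ` with `s + Δu ≤ deg - 1` pointwise; and if `s` is stabilizable then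
its odometer is the pointwise smallest such `u`. -/
theorem statement_17 {V : Type*} [Fintype V] [DecidableEq V]
    (A : V → V → ℕ) (hEul : Eulerian A) (hConn : Connected A)
    (s : V → ℤ) :
    (Stabilizable A s ↔
      ∃ u : V → ℕ, ∀ i, s i + lap A (fun j => (u j : ℤ)) i ≤ (deg A i : ℤ) - 1) ∧
    (Stabilizable A s →
      ∀ u : V → ℕ, (∀ i, s i + lap A (fun j => (u j : ℤ)) i ≤ (deg A i : ℤ) - 1) →
        ∀ i, odometerVia A (fun _ => False) s i ≤ u i) :=
  statement_17_general A s
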